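/- For every d ≥ 2, every n ∈ (0,∞) and every λ ∈ (0, 1/μ), where μ = μ(ℤ^d) is the connective constant, there exists δ > 0 such that L(δ, λ, n) < ∞; consequently λ_c(n) ≥ 1/μ for every n ∈ (0,∞). -/

import Mathlib

open scoped BigOperators ENNReal

/-- Vertices of the lattice `ℤ^d`. -/
abbrev Vtx (d : ℕ) := Fin d → ℤ

/-- Lattice adjacency: Euclidean distance one. -/
def latAdj {d : ℕ} (x y : Vtx d) : Prop := (∑ i, (x i - y i) ^ 2) = 1

/-- The hypercubic lattice `ℤ^d` as a simple graph. -/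
def latticeGraph (d : ℕ) : SimpleGraph (Vtx d) where
  Adj := latAdj
  symm := by
    constructor
    intro x y h
    unfold latAdj at h ⊢
    calc (∑ i, (y i - x i) ^ 2) = ∑ i, (x i - y i) ^ 2 :=
          Finset.sum_congr rfl fun i _ => by ring
      _ = 1 := h
  loopless := by
    constructor
    intro x h
    unfold latAdj at h
    simp at h

/-- The `i`-th standard unit vector of `ℤ^d`. -/
def stdv (d : ℕ) (i : ℕ) : Vtx d := fun j => if (j : ℕ) = i then 1 else 0

/-- A finite domain: a finite subgraph of the lattice containing all lattice edges
between its vertices. -/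
def IsFiniteDomain {d : ℕ} (G : (latticeGraph d).Subgraph) : Prop :=
  G.verts.Finite ∧ ∀ x ∈ G.verts, ∀ y ∈ G.verts, (latticeGraph d).Adj x y → G.Adj x y

/-- `Ω_G`: spanning subgraphs of `G` in which every vertex has degree `0` or `2`. -/
def loopConfigs {d : ℕ} (G : (latticeGraph d).Subgraph) : Set ((latticeGraph d).Subgraph) :=
  {κ | κ ≤ G ∧ κ.verts = G.verts ∧
    ∀ v ∈ κ.verts, (κ.neighborSet v).ncard = 0 ∨ (κ.neighborSet v).ncard = 2}

/-- `L(κ)`: the number of loops of `κ`, i.e. of connected components containing an edge. -/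
noncomputable def numLoops {d : ℕ} (κ : (latticeGraph d).Subgraph) : ℕ :=
  Set.ncard {C : κ.spanningCoe.ConnectedComponent | ∃ e ∈ κ.edgeSet, ∀ v ∈ e, v ∈ C.supp}

/-- The weight `λ^{o(κ)} n^{L(κ)}` of a configuration (with the convention `0^0 = 1`). -/
noncomputable def loopWt {d : ℕ} (lam n : ℝ) (κ : (latticeGraph d).Subgraph) : ℝ :=
  lam ^ κ.edgeSet.ncard * n ^ numLoops κ

/-- The partition function `Z_{λ,n}(G)`. -/
noncomputable def partitionZ {d : ℕ} (lam n : ℝ) (G : (latticeGraph d).Subgraph) : ℝ :=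
  ∑' κ : loopConfigs G, loopWt lam n κ.1

/-- The probability, under the loop `O(n)` measure on `Ω_G`, of an event `A`. -/
noncomputable def probEvent {d : ℕ} (lam n : ℝ) (G : (latticeGraph d).Subgraph)
    (A : (latticeGraph d).Subgraph → Prop) : ℝ :=
  (∑' κ : {κ : (latticeGraph d).Subgraph // κ ∈ loopConfigs G ∧ A κ}, loopWt lam n κ.1) /
    partitionZ lam n G

/-- The set of edges of the connected component of `x` in `κ`. -/
def compEdgeSet {d : ℕ} (κ : (latticeGraph d).Subgraph) (x : Vtx d) : Set (Sym2 (Vtx d)) :=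
  {e | e ∈ κ.edgeSet ∧ ∀ v ∈ e, κ.spanningCoe.Reachable x v}

/-- `|P_x(κ)|`: the number of edges of the connected component of `x` in `κ`. -/
noncomputable def compLen {d : ℕ} (κ : (latticeGraph d).Subgraph) (x : Vtx d) : ℕ :=
  (compEdgeSet κ x).ncard

/-- `P_x(κ)`: the connected component of `x` in `κ`, as a subgraph of the lattice. -/
def compSubgraph {d : ℕ} (κ : (latticeGraph d).Subgraph) (x : Vtx d) :
    (latticeGraph d).Subgraph where
  verts := {v | v ∈ κ.verts ∧ κ.spanningCoe.Reachable x v}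
  Adj u v := κ.Adj u v ∧ κ.spanningCoe.Reachable x u
  adj_sub h := κ.adj_sub h.1
  edge_vert h := ⟨κ.edge_vert h.1, h.2⟩
  symm := by
    constructor
    intro u v h
    exact ⟨κ.adj_symm h.1, h.2.trans (SimpleGraph.Adj.reachable (G := κ.spanningCoe) h.1)⟩

/-- A self-avoiding walk with `M` vertices (length `M - 1`) starting at `x`. -/
def IsSAWalk {d M : ℕ} (x : Vtx d) (ω : Fin M → Vtx d) : Prop :=
  (∀ h : 0 < M, ω ⟨0, h⟩ = x) ∧ Function.Injective ω ∧
    ∀ i : ℕ, ∀ h : i + 1 < M, latAdj (ω ⟨i, by omega⟩) (ω ⟨i + 1, h⟩)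

/-- A pattern: a finite walk `(p 0, …, p len)` (to be used as a self-avoiding walk). -/
structure SAWPattern (d : ℕ) where
  len : ℕ
  p : Fin (len + 1) → Vtx d

/-- The pattern `P` occurs at step `j` of the walk `ω`. -/
def occursAt {d M : ℕ} (P : SAWPattern d) (ω : Fin M → Vtx d) (j : ℕ) : Prop :=
  ∃ (h : j + P.len + 1 ≤ M) (v : Vtx d), ∀ k : Fin (P.len + 1),
    ω ⟨j + k.1, by have hk := k.2; omega⟩ = P.p k + v

/-- The number of steps of `ω` at which the pattern `P` occurs. -/
noncomputable def numOcc {d M : ℕ} (P : SAWPattern d) (ω : Fin M → Vtx d) : ℕ :=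
  Set.ncard {j : ℕ | occursAt P ω j}

/-- A proper internal pattern: for every `k` there is a self-avoiding walk on which the
pattern occurs at `k` or more different steps. -/
def ProperInternal {d : ℕ} (P : SAWPattern d) : Prop :=
  ∀ k : ℕ, ∃ (x : Vtx d) (M : ℕ) (ω : Fin (M + 1) → Vtx d), IsSAWalk x ω ∧ k ≤ numOcc P ω

/-- `|SAW_x(N)|`: the number of `N`-step self-avoiding walks starting at `x`. -/
noncomputable def numSAW (d : ℕ) (x : Vtx d) (N : ℕ) : ℕ :=
  Nat.card {ω : Fin (N + 1) → Vtx d // IsSAWalk x ω}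

/-- `|SAW_x[N, w, P]|`: the number of `N`-step self-avoiding walks starting at `x` on which
the pattern `P` occurs at fewer than `w` steps. -/
noncomputable def numSAWFewOcc (d : ℕ) (x : Vtx d) (N : ℕ) (w : ℝ) (P : SAWPattern d) : ℕ :=
  Nat.card {ω : Fin (N + 1) → Vtx d // IsSAWalk x ω ∧ (numOcc P ω : ℝ) < w}

/-- The connective constant `μ(ℤ^d) = lim_N |SAW_0(N)|^{1/N}` (the limit exists, hence
equals the `limsup`). -/
noncomputable def connConst (d : ℕ) : ℝ :=
  Filter.limsup (fun N : ℕ => (numSAW d 0 N : ℝ) ^ ((N : ℝ)⁻¹)) Filter.atTop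

/-- The pattern `P' = (o, e₂, e₁ + e₂, e₁)`. -/
def patternP' (d : ℕ) : SAWPattern d :=
  ⟨3, ![0, stdv d 1, stdv d 0 + stdv d 1, stdv d 0]⟩

/-- `P ∈ SAP_x(N)`: `P` is an `N`-step self-avoiding polygon one of whose vertices is `x`;
for `N = 1` the degenerate polygon `{x}`, for `N ≥ 4` a single cycle with `N` vertices and
`N` edges. -/
def IsSAP {d : ℕ} (x : Vtx d) (N : ℕ) (P : (latticeGraph d).Subgraph) : Prop :=
  (N = 1 ∧ P.verts = {x} ∧ P.edgeSet = ∅) ∨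
  (4 ≤ N ∧ x ∈ P.verts ∧ P.verts.ncard = N ∧ P.edgeSet.ncard = N ∧
    (∀ v ∈ P.verts, (P.neighborSet v).ncard = 2) ∧
    ∀ u ∈ P.verts, ∀ v ∈ P.verts, P.spanningCoe.Reachable u v)

/-- The walk `ω` (with `N` vertices) traces the `N`-step self-avoiding polygon `P`,
starting at `x`. -/
def Traces {d : ℕ} (x : Vtx d) (N : ℕ) (P : (latticeGraph d).Subgraph)
    (ω : Fin N → Vtx d) : Prop :=
  IsSAWalk x ω ∧ (∀ v, v ∈ P.verts ↔ ∃ i, ω i = v) ∧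
    (∀ i : ℕ, ∀ h : i + 1 < N, P.Adj (ω ⟨i, by omega⟩) (ω ⟨i + 1, h⟩)) ∧
    ∀ h : 0 < N, P.Adj (ω ⟨N - 1, by omega⟩) (ω ⟨0, h⟩)

/-- `G ∖ P`: the subgraph of `G` induced on `V_G ∖ V_P`. -/
def graphDiff {d : ℕ} (G P : (latticeGraph d).Subgraph) : (latticeGraph d).Subgraph where
  verts := G.verts \ P.verts
  Adj u v := G.Adj u v ∧ u ∉ P.verts ∧ v ∉ P.verts
  adj_sub h := G.adj_sub h.1
  edge_vert h := ⟨G.edge_vert h.1, h.2.1⟩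
  symm := ⟨fun _ _ h => ⟨G.adj_symm h.1, h.2.2, h.2.1⟩⟩

/-- The subgraph of `G` induced on a vertex set `S` (used for `U(P)` with `S = V_P`). -/
def inducedOn {d : ℕ} (G : (latticeGraph d).Subgraph) (S : Set (Vtx d)) :
    (latticeGraph d).Subgraph where
  verts := S
  Adj u v := G.Adj u v ∧ u ∈ S ∧ v ∈ S
  adj_sub h := G.adj_sub h.1
  edge_vert h := h.2.1
  symm := ⟨fun _ _ h => ⟨G.adj_symm h.1, h.2.2, h.2.1⟩⟩

/-- The unit-square polygon with corner `x`: vertices `x, x+e₁, x+e₂, x+e₁+e₂` and the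
four lattice edges between them. -/
def unitSquare (d : ℕ) (x : Vtx d) : (latticeGraph d).Subgraph where
  verts := {x, x + stdv d 0, x + stdv d 1, x + stdv d 0 + stdv d 1}
  Adj u v := (latticeGraph d).Adj u v ∧
    u ∈ ({x, x + stdv d 0, x + stdv d 1, x + stdv d 0 + stdv d 1} : Set (Vtx d)) ∧
    v ∈ ({x, x + stdv d 0, x + stdv d 1, x + stdv d 0 + stdv d 1} : Set (Vtx d))
  adj_sub h := h.1
  edge_vert h := h.2.1
  symm := ⟨fun _ _ h => ⟨h.1.symm, h.2.2, h.2.1⟩⟩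

/-- `E_{G,λ,n}[e^{δ |P_x|}]`. -/
noncomputable def expMoment {d : ℕ} (δ lam n : ℝ) (G : (latticeGraph d).Subgraph)
    (x : Vtx d) : ℝ :=
  (∑' κ : loopConfigs G, Real.exp (δ * (compLen κ.1 x : ℝ)) * loopWt lam n κ.1) /
    partitionZ lam n G

/-- `L(δ, λ, n)`: the supremum of `E_{G,λ,n}[e^{δ |P_x|}]` over finite domains `G ⊆ ℤ^d`
and `x ∈ V_G`, valued in `[0,∞]`. -/
noncomputable def mathcalL (d : ℕ) (δ lam n : ℝ) : ℝ≥0∞ :=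
  ⨆ (G : (latticeGraph d).Subgraph) (_ : IsFiniteDomain G) (x : Vtx d) (_ : x ∈ G.verts),
    ENNReal.ofReal (expMoment δ lam n G x)

/-- `λ_c(n) = sup {λ ≥ 0 : L(δ,λ,n) < ∞ for some δ > 0}`, valued in `[0,∞]`. -/
noncomputable def lambdaC (d : ℕ) (n : ℝ) : ℝ≥0∞ :=
  ⨆ (lam : ℝ) (_ : 0 ≤ lam ∧ ∃ δ : ℝ, 0 < δ ∧ mathcalL d δ lam n < ⊤),
    ENNReal.ofReal lam

/-!
If every vertex has degree `0` or `2`, the component `P_x` of `x`, when it has an edge, is a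
cycle. Listing its vertices from `x` gives a self-avoiding walk of length `|P_x| - 1`, and erasing
the cycle leaves a configuration whose weight is that of the original divided by `λ^{|P_x|} n`.
This encoding is injective, so the configurations with `|P_x| = N` carry total weight at most
`λ^N n |SAW_x(N - 1)| Z`. Since `|SAW_x(M)| ≤ C ρ^M` for every `ρ > μ`, the moment
`E[e^{δ |P_x|}]` is dominated by a geometric series, uniformly in `G` and `x`, as soon as
`e^δ λ ρ < 1`.
-/

theorem Finset.sum_le_ncard_mul_sum_of_injOn {α β γ : Type*} [Fintype γ] {s : Finset α}
    {t : Set β} (ht : t.Finite) {E : α → β} {D : α → γ} (hE : ∀ a ∈ s, E a ∈ t)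
    (hinj : Set.InjOn (fun a => (E a, D a)) s) {g : γ → ℝ} (hg : ∀ c, 0 ≤ g c) :
    ∑ a ∈ s, g (D a) ≤ t.ncard * ∑ c, g c := by
  classical
  calc ∑ a ∈ s, g (D a) = ∑ q ∈ s.image fun a => (E a, D a), g q.2 :=
        (sum_image (f := fun q => g q.2) hinj).symm
    _ ≤ ∑ q ∈ ht.toFinset ×ˢ univ, g q.2 :=
      sum_le_sum_of_subset_of_nonneg (image_subset_iff.2 fun a ha =>
        mem_product.2 ⟨ht.mem_toFinset.2 (hE a ha), mem_univ _⟩) fun _ _ _ => hg _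
    _ = t.ncard * ∑ c, g c := by
      simp only [sum_product, sum_const, nsmul_eq_mul, Set.ncard_eq_toFinset_card t ht]

open Filter in
theorem exists_le_mul_pow_of_limsup_rpow_inv_lt {a : ℕ → ℝ} (ha : ∀ N, 0 ≤ a N)
    (hbdd : IsBoundedUnder (· ≤ ·) atTop fun N => a N ^ (N : ℝ)⁻¹) {ρ : ℝ} (hρ : 0 < ρ)
    (hlt : limsup (fun N => a N ^ (N : ℝ)⁻¹) atTop < ρ) :
    ∃ C, 0 ≤ C ∧ ∀ N, a N ≤ C * ρ ^ N := by
  obtain ⟨N₀, hN₀⟩ := eventually_atTop.1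
    ((eventually_lt_of_limsup_lt hlt hbdd).and (eventually_gt_atTop 0))
  have hsum : 0 ≤ ∑ k ∈ Finset.range N₀, a k / ρ ^ k :=
    Finset.sum_nonneg fun k _ => div_nonneg (ha k) (pow_nonneg hρ.le k)
  refine ⟨1 + ∑ k ∈ Finset.range N₀, a k / ρ ^ k, by positivity, fun N => ?_⟩
  rcases lt_or_ge N N₀ with hN | hN
  · have := (Finset.single_le_sum (fun k _ => div_nonneg (ha k) (pow_nonneg hρ.le k))
      (Finset.mem_range.2 hN)).trans (le_add_of_nonneg_left zero_le_one)
    rwa [div_le_iff₀ (pow_pos hρ N)] at this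
  · obtain ⟨hroot, hN0⟩ := hN₀ N hN
    have hpow : a N ≤ ρ ^ N := by
      simpa [Real.rpow_inv_natCast_pow (ha N) hN0.ne'] using
        pow_le_pow_left₀ (Real.rpow_nonneg (ha N) _) hroot.le N
    exact hpow.trans (le_mul_of_one_le_left (pow_nonneg hρ.le N) (le_add_of_nonneg_right hsum))

namespace SimpleGraph

variable {V : Type*} {K : SimpleGraph V}

theorem Reachable.mem_support_of_mem_support {x u : V} (h : K.Reachable x u)
    (hx : x ∈ K.support) : u ∈ K.support := by
  obtain ⟨w⟩ := h
  cases w with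
  | nil => exact hx
  | cons hadj w => exact ((Walk.cons hadj w).adj_penultimate Walk.not_nil_cons).mem_support_right

theorem ncard_neighborSet_induce_support (v : K.support) :
    ((K.induce K.support).neighborSet v).ncard = (K.neighborSet v).ncard := by
  rw [← Set.ncard_image_of_injective _ Subtype.val_injective]
  congr 1
  ext w
  simp only [Set.mem_image, mem_neighborSet, comap_adj, Function.Embedding.coe_subtype]
  exact ⟨fun ⟨w', hw', h⟩ => h ▸ hw', fun h => ⟨⟨w, h.mem_support_right⟩, h, rfl⟩⟩

theorem IsCycles.induce_support (hK : K.IsCycles) : (K.induce K.support).IsCycles := by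
  intro v ⟨w, hw⟩
  rw [ncard_neighborSet_induce_support]
  exact hK ⟨w, hw⟩

theorem IsCycles.exists_isCycle_mem_edges_iff (hK : K.IsCycles) (hfin : K.support.Finite)
    {x y : V} (hxy : K.Adj x y) :
    ∃ p : K.Walk x x, p.IsCycle ∧
      ∀ e, e ∈ p.edges ↔ e ∈ K.edgeSet ∧ ∀ v ∈ e, K.Reachable x v := by
  classical
  -- `exists_cycle_toSubgraph_verts_eq_connectedComponentSupp` needs a finite vertex type, so we
  -- work in the graph induced on the support and lift walks of `K` to it with `Walk.induce`.
  set S := K.support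
  have : Finite S := hfin.to_subtype
  set H := K.induce S
  have : H.LocallyFinite := fun _ => Fintype.ofFinite _
  set x' : S := ⟨x, hxy.mem_support_left⟩
  obtain ⟨p', hp', hverts⟩ :=
    hK.induce_support.exists_cycle_toSubgraph_verts_eq_connectedComponentSupp
      (c := H.connectedComponentMk x') rfl ⟨⟨y, hxy.mem_support_right⟩, hxy⟩
  set f := (Embedding.induce (G := K) S).toHom
  change ∃ p : K.Walk (f x') (f x'), p.IsCycle ∧
    ∀ e, e ∈ p.edges ↔ e ∈ K.edgeSet ∧ ∀ v ∈ e, K.Reachable (f x') v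
  refine ⟨p'.map f, (Walk.isCycle_map_iff_of_injective Subtype.val_injective).2 hp', fun e => ?_⟩
  rw [Walk.edges_map]
  constructor
  · intro he
    obtain ⟨e', he', rfl⟩ := List.mem_map.1 he
    refine ⟨f.map_mem_edgeSet (p'.edges_subset_edgeSet he'), fun v hv => ?_⟩
    obtain ⟨a, ha, rfl⟩ := Sym2.mem_map.1 hv
    exact ⟨((p'.takeUntil a (Walk.mem_support_of_mem_edges he' ha)).map f)⟩
  · induction e using Sym2.ind with
    | _ u v =>
    rintro ⟨huv, hreach⟩
    have hS : ∀ {z}, K.Reachable x z → z ∈ S := fun h => h.mem_support_of_mem_support x'.2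
    obtain ⟨w⟩ := hreach u (Sym2.mem_mk_left u v)
    have hu : (⟨u, huv.mem_support_left⟩ : S) ∈ p'.toSubgraph.verts := by
      rw [hverts, ConnectedComponent.mem_supp_iff, ConnectedComponent.eq]
      exact ⟨(w.induce S fun z hz => hS ⟨w.takeUntil z hz⟩).reverse⟩
    have hadj := (hp'.adj_toSubgraph_iff_of_isCycles hK.induce_support hu
      ⟨v, huv.mem_support_right⟩).2 huv
    exact List.mem_map.2 ⟨s(_, _), p'.mem_edges_toSubgraph.1 hadj, rfl⟩

namespace Subgraph

variable {H H₁ H₂ : K.Subgraph}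

theorem ext_of_verts_of_edgeSet (hV : H₁.verts = H₂.verts) (hE : H₁.edgeSet = H₂.edgeSet) :
    H₁ = H₂ := by
  ext u v
  · rw [hV]
  · rw [← Subgraph.mem_edgeSet, ← Subgraph.mem_edgeSet, hE]

theorem edgeSet_finite_of_verts_finite (h : H.verts.Finite) :
    H.edgeSet.Finite :=
  ((h.prod h).image fun p => s(p.1, p.2)).subset fun e he => by
    induction e using Sym2.ind with
    | _ u v => exact ⟨(u, v), ⟨he.fst_mem, he.snd_mem⟩, rfl⟩

end Subgraph

namespace Walk

theorem getVert_val_fin_add_one {u : V} (p : K.Walk u u) {M : ℕ} (hM : p.length = M + 1)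
    (k : Fin (M + 1)) : p.getVert ↑(k + 1) = p.getVert (k + 1) := by
  rw [Fin.val_add_one]
  split_ifs with hk
  · rw [hk, Fin.val_last, ← hM, getVert_length, getVert_zero]
  · rfl

theorem mem_edges_iff_exists_fin {u : V} (p : K.Walk u u) {M : ℕ} (hM : p.length = M + 1)
    {e : Sym2 V} : e ∈ p.edges ↔ ∃ k : Fin (M + 1), e = s(p.getVert k, p.getVert ↑(k + 1)) := by
  induction e using Sym2.ind with
  | _ v w =>
  simp only [mk_mem_edges_iff_exists, p.getVert_val_fin_add_one hM, hM, eq_comm]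
  exact ⟨fun ⟨i, hi, h⟩ => ⟨⟨i, hi⟩, h⟩, fun ⟨k, h⟩ => ⟨k, k.2, h⟩⟩

end Walk

def deleteComponent (K : SimpleGraph V) (x : V) : SimpleGraph V where
  Adj u v := K.Adj u v ∧ ¬K.Reachable x u ∧ ¬K.Reachable x v
  symm := ⟨fun _ _ h => ⟨h.1.symm, h.2.2, h.2.1⟩⟩
  loopless := ⟨fun _ h => h.1.ne rfl⟩

variable {x : V}

theorem Reachable.deleteComponent {u w : V} (h : K.Reachable u w) (hu : ¬K.Reachable x u) :
    (K.deleteComponent x).Reachable u w := by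
  obtain ⟨p⟩ := h
  induction p with
  | nil => rfl
  | cons hadj p ih =>
    have hv : ¬K.Reachable x _ := fun hv => hu (hv.trans hadj.symm.reachable)
    exact (Adj.reachable (G := K.deleteComponent x) ⟨hadj, hu, hv⟩).trans (ih hv)

theorem mem_support_deleteComponent {u : V} :
    u ∈ (K.deleteComponent x).support ↔ u ∈ K.support ∧ ¬K.Reachable x u := by
  constructor
  · rintro ⟨v, huv, hu, -⟩
    exact ⟨huv.mem_support_left, hu⟩
  · rintro ⟨⟨v, huv⟩, hu⟩
    exact ⟨v, huv, hu, fun hv => hu (hv.trans huv.symm.reachable)⟩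

/-- The components containing an edge are the images of the support, and deleting the component
of `x` removes exactly one of them. -/
theorem ncard_image_connectedComponentMk_support_deleteComponent (hx : x ∈ K.support)
    (hfin : K.support.Finite) :
    (K.connectedComponentMk '' K.support).ncard =
      ((K.deleteComponent x).connectedComponentMk '' (K.deleteComponent x).support).ncard + 1 := by
  set K' := K.deleteComponent x
  set φ := ConnectedComponent.map (Hom.ofLE (fun _ _ h => h.1 : K' ≤ K))
  have himage : φ '' (K'.connectedComponentMk '' K'.support) =
      K.connectedComponentMk '' K.support \ {K.connectedComponentMk x} := by
    ext C
    simp only [Set.image_image, Set.mem_sdiff, Set.mem_image, Set.mem_singleton_iff, K',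
      mem_support_deleteComponent]
    constructor
    · rintro ⟨u, ⟨hu, hxu⟩, rfl⟩
      exact ⟨⟨u, hu, rfl⟩, fun h => hxu (ConnectedComponent.exact h.symm)⟩
    · rintro ⟨⟨u, hu, rfl⟩, hxu⟩
      exact ⟨u, ⟨hu, fun h => hxu (ConnectedComponent.sound h.symm)⟩, rfl⟩
  have hinj : Set.InjOn φ (K'.connectedComponentMk '' K'.support) := by
    rintro _ ⟨u, hu, rfl⟩ _ ⟨v, -, rfl⟩ h
    exact ConnectedComponent.sound <| (ConnectedComponent.exact h).deleteComponent
      (mem_support_deleteComponent.1 hu).2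
  rw [← hinj.ncard_image, himage,
    Set.ncard_sdiff_singleton_add_one (Set.mem_image_of_mem _ hx) (hfin.image _)]

end SimpleGraph

section SelfAvoidingWalks

variable {d : ℕ}

theorem latAdj_sub_sub {x y : Vtx d} (v : Vtx d) : latAdj (x - v) (y - v) ↔ latAdj x y := by
  simp only [latAdj, Pi.sub_apply, sub_sub_sub_cancel_right]

theorem finite_setOf_latAdj_zero (d : ℕ) : {v : Vtx d | latAdj v 0}.Finite := by
  refine (Set.Finite.pi' fun _ => Set.finite_Icc (-1 : ℤ) 1).subset fun v hv i => ?_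
  have hle : (v i - (0 : Vtx d) i) ^ 2 ≤ 1 :=
    hv ▸ Finset.single_le_sum (f := fun j => (v j - (0 : Vtx d) j) ^ 2)
      (fun j _ => sq_nonneg _) (Finset.mem_univ i)
  simp only [Pi.zero_apply, sub_zero] at hle
  constructor <;> nlinarith

/-- A self-avoiding walk is determined by its sequence of unit steps. -/
theorem exists_injective_steps (x : Vtx d) (N : ℕ) :
    ∃ F : {ω : Fin (N + 1) → Vtx d // IsSAWalk x ω} → (Fin N → {v : Vtx d | latAdj v 0}),
      Function.Injective F := by
  refine ⟨fun ω i => ⟨ω.1 i.succ - ω.1 i.castSucc, ?_⟩, fun ω₁ ω₂ h => ?_⟩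
  · have h : (latticeGraph d).Adj (ω.1 i.castSucc) (ω.1 i.succ) := ω.2.2.2 i i.succ.2
    have := (latAdj_sub_sub (ω.1 i.castSucc)).2 h.symm
    rwa [sub_self] at this
  · apply Subtype.ext
    funext k
    induction k using Fin.induction with
    | zero => exact (ω₁.2.1 N.succ_pos).trans (ω₂.2.1 N.succ_pos).symm
    | succ i ih =>
      have hi := congrArg Subtype.val (congrFun h i)
      simp only at hi
      rw [← sub_add_cancel (ω₁.1 i.succ) (ω₁.1 i.castSucc), hi, ih, sub_add_cancel]

instance finite_isSAWalk (x : Vtx d) (N : ℕ) :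
    Finite {ω : Fin (N + 1) → Vtx d // IsSAWalk x ω} :=
  have : Finite {v : Vtx d | latAdj v 0} := (finite_setOf_latAdj_zero d).to_subtype
  let ⟨_, hF⟩ := exists_injective_steps x N
  Finite.of_injective _ hF

theorem numSAW_le_pow (x : Vtx d) (N : ℕ) :
    numSAW d x N ≤ {v : Vtx d | latAdj v 0}.ncard ^ N := by
  have : Finite {v : Vtx d | latAdj v 0} := (finite_setOf_latAdj_zero d).to_subtype
  obtain ⟨F, hF⟩ := exists_injective_steps x N
  exact (Nat.card_le_card_of_injective F hF).trans_eq (by simp [Nat.card_fun])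

theorem numSAW_eq_numSAW_zero (x : Vtx d) (N : ℕ) : numSAW d x N = numSAW d 0 N := by
  refine Nat.card_congr ⟨fun ω => ⟨fun i => ω.1 i - x, ?_⟩, fun ω => ⟨fun i => ω.1 i + x, ?_⟩,
    fun ω => by simp, fun ω => by simp⟩
  · obtain ⟨h0, hinj, hadj⟩ := ω.2
    exact ⟨fun h => (congrArg (· - x) (h0 h)).trans (sub_self x),
      fun a b hab => hinj (sub_left_inj.1 hab), fun i h => (latAdj_sub_sub x).2 (hadj i h)⟩
  · obtain ⟨h0, hinj, hadj⟩ := ω.2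
    refine ⟨fun h => (congrArg (· + x) (h0 h)).trans (zero_add x),
      fun a b hab => hinj ((add_left_inj x).1 hab), fun i h => ?_⟩
    simpa using (latAdj_sub_sub (-x)).2 (hadj i h)

theorem isSAWalk_getVert_of_isCycle {K : SimpleGraph (Vtx d)} (hK : K ≤ latticeGraph d)
    {x : Vtx d} {p : K.Walk x x} (hp : p.IsCycle) {M : ℕ} (hM : p.length = M + 1) :
    IsSAWalk x fun k : Fin (M + 1) => p.getVert k := by
  refine ⟨fun _ => p.getVert_zero, fun i j hij => Fin.ext ?_, fun i hi => ?_⟩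
  · exact hp.getVert_injOn' (by simp only [Set.mem_ofPred_eq]; omega)
      (by simp only [Set.mem_ofPred_eq]; omega) hij
  · exact hK (p.adj_getVert_succ (by omega))

end SelfAvoidingWalks

section ConnectiveConstant

open Filter

variable {d : ℕ}

theorem isBoundedUnder_numSAW_rpow_inv (d : ℕ) :
    IsBoundedUnder (· ≤ ·) atTop fun N => (numSAW d 0 N : ℝ) ^ (N : ℝ)⁻¹ := by
  obtain ⟨B, hB⟩ : ∃ B : ℕ, ∀ N, numSAW d 0 N ≤ B ^ N := ⟨_, numSAW_le_pow 0⟩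
  refine isBoundedUnder_of ⟨((max B 1 : ℕ) : ℝ), fun N => ?_⟩
  rcases N.eq_zero_or_pos with rfl | hN
  · simp
  · calc (numSAW d 0 N : ℝ) ^ (N : ℝ)⁻¹ ≤ ((B : ℝ) ^ N) ^ (N : ℝ)⁻¹ :=
          Real.rpow_le_rpow (Nat.cast_nonneg _) (by exact_mod_cast hB N) (by positivity)
      _ = B := Real.pow_rpow_inv_natCast (Nat.cast_nonneg _) hN.ne'
      _ ≤ (max B 1 : ℕ) := by exact_mod_cast le_max_left B 1

theorem connConst_nonneg (d : ℕ) : 0 ≤ connConst d :=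
  le_limsup_of_frequently_le (Frequently.of_forall fun _ => Real.rpow_nonneg (Nat.cast_nonneg _) _)
    (isBoundedUnder_numSAW_rpow_inv d)

theorem exists_numSAW_le_mul_pow {ρ : ℝ} (hρ : connConst d < ρ) :
    ∃ C, 0 ≤ C ∧ ∀ N, (numSAW d 0 N : ℝ) ≤ C * ρ ^ N :=
  exists_le_mul_pow_of_limsup_rpow_inv_lt (fun _ => Nat.cast_nonneg _)
    (isBoundedUnder_numSAW_rpow_inv d) ((connConst_nonneg d).trans_lt hρ) hρ

end ConnectiveConstant

section Configurations

open SimpleGraph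

variable {d : ℕ} {G κ : (latticeGraph d).Subgraph} {x : Vtx d}

theorem IsFiniteDomain.edgeSet_finite (hG : IsFiniteDomain G) : G.edgeSet.Finite :=
  Subgraph.edgeSet_finite_of_verts_finite hG.1

theorem IsFiniteDomain.loopConfigs_finite (hG : IsFiniteDomain G) : (loopConfigs G).Finite :=
  Set.Finite.of_finite_image (hG.edgeSet_finite.finite_subsets.subset <|
      Set.image_subset_iff.2 fun _ hκ => Subgraph.edgeSet_mono hκ.1)
    fun _ h₁ _ h₂ hE => Subgraph.ext_of_verts_of_edgeSet (h₁.2.1.trans h₂.2.1.symm) hE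

theorem edgeSet_finite_of_mem_loopConfigs (hG : IsFiniteDomain G) (hκ : κ ∈ loopConfigs G) :
    κ.edgeSet.Finite :=
  hG.edgeSet_finite.subset (Subgraph.edgeSet_mono hκ.1)

theorem compLen_le_ncard_edgeSet (hG : IsFiniteDomain G) (hκ : κ ∈ loopConfigs G) (x : Vtx d) :
    compLen κ x ≤ G.edgeSet.ncard :=
  Set.ncard_le_ncard (fun _ he => Subgraph.edgeSet_mono hκ.1 he.1) hG.edgeSet_finite

theorem deleteEdges_edgeSet_mem_loopConfigs (G : (latticeGraph d).Subgraph) :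
    G.deleteEdges G.edgeSet ∈ loopConfigs G :=
  ⟨Subgraph.deleteEdges_le _, rfl, fun _ _ => Or.inl <| by simp [Subgraph.neighborSet]⟩

theorem loopWt_deleteEdges_edgeSet (lam n : ℝ) (G : (latticeGraph d).Subgraph) :
    loopWt lam n (G.deleteEdges G.edgeSet) = 1 := by
  have hE : (G.deleteEdges G.edgeSet).edgeSet = ∅ := by
    ext e
    induction e using Sym2.ind with
    | _ u v => simp
  simp [loopWt, numLoops, hE]

theorem loopWt_nonneg {lam n : ℝ} (hl : 0 ≤ lam) (hn : 0 ≤ n) (κ : (latticeGraph d).Subgraph) :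
    0 ≤ loopWt lam n κ :=
  mul_nonneg (pow_nonneg hl _) (pow_nonneg hn _)

theorem one_le_partitionZ {lam n : ℝ} (hl : 0 ≤ lam) (hn : 0 ≤ n) (hG : IsFiniteDomain G) :
    1 ≤ partitionZ lam n G := by
  have := hG.loopConfigs_finite.fintype
  rw [partitionZ, tsum_fintype]
  simpa [loopWt_deleteEdges_edgeSet] using Finset.single_le_sum
    (f := fun κ : loopConfigs G => loopWt lam n κ.1) (fun κ _ => loopWt_nonneg hl hn κ.1)
    (Finset.mem_univ ⟨_, deleteEdges_edgeSet_mem_loopConfigs G⟩)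

end Configurations

section DeleteLoop

open SimpleGraph

variable {d : ℕ} {G κ : (latticeGraph d).Subgraph} {x : Vtx d}

/-- The configuration `κ ∖ P_x(κ)`. -/
def delComp (κ : (latticeGraph d).Subgraph) (x : Vtx d) : (latticeGraph d).Subgraph where
  verts := κ.verts
  Adj u v := κ.Adj u v ∧ ¬κ.spanningCoe.Reachable x u ∧ ¬κ.spanningCoe.Reachable x v
  adj_sub h := κ.adj_sub h.1
  edge_vert h := κ.edge_vert h.1
  symm := ⟨fun _ _ h => ⟨κ.adj_symm h.1, h.2.2, h.2.1⟩⟩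

theorem spanningCoe_delComp : (delComp κ x).spanningCoe = κ.spanningCoe.deleteComponent x :=
  rfl

theorem delComp_mem_loopConfigs (hκ : κ ∈ loopConfigs G) : delComp κ x ∈ loopConfigs G := by
  refine ⟨⟨hκ.1.1, fun _ _ h => hκ.1.2 h.1⟩, hκ.2.1, fun v hv => ?_⟩
  by_cases hx : κ.spanningCoe.Reachable x v
  · left
    simp [Subgraph.neighborSet, delComp, hx]
  · convert hκ.2.2 v hv using 3 <;>
    · ext w
      exact ⟨fun h => h.1, fun h =>
        ⟨h, hx, fun hw => hx (hw.trans (Adj.reachable (G := κ.spanningCoe) h.symm))⟩⟩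

theorem delComp_edgeSet : (delComp κ x).edgeSet = κ.edgeSet \ compEdgeSet κ x := by
  ext e
  induction e using Sym2.ind with
  | _ u v =>
  simp only [Subgraph.mem_edgeSet, Set.mem_sdiff, compEdgeSet, Set.mem_ofPred_eq, Sym2.mem_iff,
    forall_eq_or_imp, forall_eq, delComp]
  constructor
  · rintro ⟨h, hu, -⟩
    exact ⟨h, fun hc => hu hc.2.1⟩
  · rintro ⟨h, hc⟩
    have hu : ¬κ.spanningCoe.Reachable x u := fun hu =>
      hc ⟨h, hu, hu.trans (Adj.reachable (G := κ.spanningCoe) h)⟩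
    exact ⟨h, hu, fun hv => hu (hv.trans (Adj.reachable (G := κ.spanningCoe) h.symm))⟩

theorem ncard_edgeSet_eq_ncard_delComp_add_compLen (hG : IsFiniteDomain G)
    (hκ : κ ∈ loopConfigs G) :
    κ.edgeSet.ncard = (delComp κ x).edgeSet.ncard + compLen κ x := by
  rw [delComp_edgeSet, compLen, Set.ncard_sdiff_add_ncard_of_subset (fun _ he => he.1)
    (edgeSet_finite_of_mem_loopConfigs hG hκ)]

theorem numLoops_eq_ncard_image_support (κ : (latticeGraph d).Subgraph) :
    numLoops κ = (κ.spanningCoe.connectedComponentMk '' κ.spanningCoe.support).ncard := by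
  rw [numLoops]
  congr 1
  ext C
  constructor
  · rintro ⟨e, he, hC⟩
    induction e using Sym2.ind with
    | _ u v => exact ⟨u, ⟨v, he⟩, hC u (Sym2.mem_mk_left u v)⟩
  · rintro ⟨u, ⟨v, huv⟩, rfl⟩
    refine ⟨s(u, v), huv, fun w hw => ?_⟩
    rcases Sym2.mem_iff.1 hw with rfl | rfl
    · rfl
    · exact ConnectedComponent.sound (Adj.reachable (G := κ.spanningCoe) huv).symm

theorem mem_support_of_compLen_pos (h : 0 < compLen κ x) : x ∈ κ.spanningCoe.support := by
  obtain ⟨e, he, hreach⟩ := Set.nonempty_of_ncard_ne_zero h.ne'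
  induction e using Sym2.ind with
  | _ u v =>
  exact (hreach u (Sym2.mem_mk_left u v)).symm.mem_support_of_mem_support ⟨v, he⟩

theorem support_finite_of_mem_loopConfigs (hG : IsFiniteDomain G) (hκ : κ ∈ loopConfigs G) :
    κ.spanningCoe.support.Finite :=
  hG.1.subset fun _ ⟨_, h⟩ => hκ.2.1 ▸ κ.edge_vert h

theorem numLoops_eq_numLoops_delComp_add_one (hG : IsFiniteDomain G) (hκ : κ ∈ loopConfigs G)
    (h : 0 < compLen κ x) : numLoops κ = numLoops (delComp κ x) + 1 := by
  rw [numLoops_eq_ncard_image_support, numLoops_eq_ncard_image_support, spanningCoe_delComp]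
  exact ncard_image_connectedComponentMk_support_deleteComponent
    (mem_support_of_compLen_pos h) (support_finite_of_mem_loopConfigs hG hκ)

theorem loopWt_eq_mul_loopWt_delComp (lam n : ℝ) (hG : IsFiniteDomain G)
    (hκ : κ ∈ loopConfigs G) (h : 0 < compLen κ x) :
    loopWt lam n κ = lam ^ compLen κ x * n * loopWt lam n (delComp κ x) := by
  rw [loopWt, loopWt, numLoops_eq_numLoops_delComp_add_one hG hκ h,
    ncard_edgeSet_eq_ncard_delComp_add_compLen hG hκ]
  ring

theorem eq_of_compEdgeSet_eq_of_delComp_eq {κ₁ κ₂ : (latticeGraph d).Subgraph}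
    (hκ₁ : κ₁ ∈ loopConfigs G) (hκ₂ : κ₂ ∈ loopConfigs G)
    (hE : compEdgeSet κ₁ x = compEdgeSet κ₂ x) (hD : delComp κ₁ x = delComp κ₂ x) :
    κ₁ = κ₂ := by
  have hsplit : ∀ κ : (latticeGraph d).Subgraph,
      κ.edgeSet = (delComp κ x).edgeSet ∪ compEdgeSet κ x := fun κ => by
    rw [delComp_edgeSet, Set.sdiff_union_of_subset fun _ he => he.1]
  exact Subgraph.ext_of_verts_of_edgeSet (hκ₁.2.1.trans hκ₂.2.1.symm)
    (by rw [hsplit κ₁, hsplit κ₂, hE, hD])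

theorem isCycles_spanningCoe_of_mem_loopConfigs (hG : IsFiniteDomain G)
    (hκ : κ ∈ loopConfigs G) : κ.spanningCoe.IsCycles := by
  intro v ⟨w, hw⟩
  have hfin : (κ.neighborSet v).Finite :=
    hG.1.subset fun _ h => hκ.2.1 ▸ κ.edge_vert (κ.adj_symm h)
  exact (hκ.2.2 v (κ.edge_vert hw)).resolve_left
    fun h0 => ((Set.ncard_eq_zero hfin).1 h0).subset hw

/-- Here `k + 1` wraps around in `Fin (M + 1)`, which supplies the closing edge `s(ω M, x)`. -/
theorem exists_isSAWalk_compEdgeSet_eq (hG : IsFiniteDomain G) (hκ : κ ∈ loopConfigs G)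
    {M : ℕ} (hM : compLen κ x = M + 1) :
    ∃ ω : Fin (M + 1) → Vtx d, IsSAWalk x ω ∧
      compEdgeSet κ x = {e | ∃ k, e = s(ω k, ω (k + 1))} := by
  obtain ⟨y, hxy⟩ := mem_support_of_compLen_pos (κ := κ) (x := x) (by omega)
  obtain ⟨p, hp, hedges⟩ :=
    (isCycles_spanningCoe_of_mem_loopConfigs hG hκ).exists_isCycle_mem_edges_iff
      (support_finite_of_mem_loopConfigs hG hκ) hxy
  have hcomp : compEdgeSet κ x = {e | e ∈ p.edges} := by
    ext e
    rw [Set.mem_ofPred_eq, hedges, Subgraph.edgeSet_spanningCoe]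
    rfl
  have hlen : p.length = M + 1 := by
    rw [← hM, compLen, hcomp, ← p.length_edges, ← List.coe_toFinset, Set.ncard_coe_finset,
      List.toFinset_card_of_nodup hp.edges_nodup]
  refine ⟨_, isSAWalk_getVert_of_isCycle (fun _ _ h => κ.adj_sub h) hp hlen, ?_⟩
  rw [hcomp]
  ext e
  exact p.mem_edges_iff_exists_fin hlen

end DeleteLoop

section FiberBound

open SimpleGraph

variable {d : ℕ} {G : (latticeGraph d).Subgraph} {lam n : ℝ}

/-- Cutting out the loop through `x` encodes a configuration with `|P_x| = M + 1` injectively by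
a self-avoiding walk of length `M` and a configuration, at the cost of the factor `λ^{M+1} n`. -/
theorem sum_loopWt_compLen_eq_succ_le (hl : 0 ≤ lam) (hn : 0 ≤ n) (hG : IsFiniteDomain G)
    (x : Vtx d) (M : ℕ) [Fintype (loopConfigs G)] :
    ∑ κ ∈ Finset.univ.filter (fun κ : loopConfigs G => compLen κ.1 x = M + 1), loopWt lam n κ.1
      ≤ lam ^ (M + 1) * n * numSAW d x M * partitionZ lam n G := by
  set F := Finset.univ.filter fun κ : loopConfigs G => compLen κ.1 x = M + 1
  choose! E hE using fun κ (hκ : κ ∈ F) =>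
    exists_isSAWalk_compEdgeSet_eq hG κ.2 (Finset.mem_filter.1 hκ).2
  set D : loopConfigs G → loopConfigs G := fun κ => ⟨delComp κ.1 x, delComp_mem_loopConfigs κ.2⟩
  have hinj : Set.InjOn (fun κ => (E κ, D κ)) F := fun κ₁ h₁ κ₂ h₂ h => by
    simp only [Prod.mk.injEq] at h
    exact Subtype.ext <| eq_of_compEdgeSet_eq_of_delComp_eq κ₁.2 κ₂.2
      (by rw [(hE κ₁ h₁).2, (hE κ₂ h₂).2, h.1]) (congrArg Subtype.val h.2)
  have hfin : {ω : Fin (M + 1) → Vtx d | IsSAWalk x ω}.Finite :=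
    Set.finite_coe_iff.1 (finite_isSAWalk x M)
  calc ∑ κ ∈ F, loopWt lam n κ.1 = ∑ κ ∈ F, lam ^ (M + 1) * n * loopWt lam n (D κ).1 :=
        Finset.sum_congr rfl fun κ hκ => by
          have hκ' : compLen κ.1 x = M + 1 := (Finset.mem_filter.1 hκ).2
          rw [loopWt_eq_mul_loopWt_delComp (x := x) lam n hG κ.2 (by omega), hκ']
    _ = lam ^ (M + 1) * n * ∑ κ ∈ F, loopWt lam n (D κ).1 := (Finset.mul_sum ..).symm
    _ ≤ lam ^ (M + 1) * n * ({ω : Fin (M + 1) → Vtx d | IsSAWalk x ω}.ncard *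
          ∑ κ : loopConfigs G, loopWt lam n κ.1) :=
        mul_le_mul_of_nonneg_left (Finset.sum_le_ncard_mul_sum_of_injOn hfin
          (fun κ hκ => (hE κ hκ).1) hinj fun _ => loopWt_nonneg hl hn _)
          (mul_nonneg (pow_nonneg hl _) hn)
    _ = lam ^ (M + 1) * n * numSAW d x M * partitionZ lam n G := by
        rw [partitionZ, tsum_fintype, numSAW, ← Set.coe_ofPred, Nat.card_coe_set_eq]
        ring

end FiberBound

section ExponentialMoment

variable {d : ℕ} {G : (latticeGraph d).Subgraph} {lam n : ℝ}

theorem sum_exp_mul_loopWt_compLen_eq_succ_le (hl : 0 ≤ lam) (hn : 0 ≤ n)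
    (hG : IsFiniteDomain G) (x : Vtx d) [Fintype (loopConfigs G)] {δ C ρ : ℝ} {M : ℕ}
    (hgrow : (numSAW d x M : ℝ) ≤ C * ρ ^ M) :
    ∑ κ ∈ Finset.univ.filter (fun κ : loopConfigs G => compLen κ.1 x = M + 1),
        Real.exp (δ * compLen κ.1 x) * loopWt lam n κ.1
      ≤ n * C * Real.exp δ * lam * (Real.exp δ * lam * ρ) ^ M * partitionZ lam n G := by
  have hZ : 0 ≤ partitionZ lam n G := zero_le_one.trans (one_le_partitionZ hl hn hG)
  calc _ = Real.exp δ ^ (M + 1) * ∑ κ ∈ Finset.univ.filter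
          (fun κ : loopConfigs G => compLen κ.1 x = M + 1), loopWt lam n κ.1 := by
        rw [Finset.mul_sum, ← Real.exp_nat_mul]
        exact Finset.sum_congr rfl fun κ hκ => by rw [(Finset.mem_filter.1 hκ).2, mul_comm δ]
    _ ≤ Real.exp δ ^ (M + 1) * (lam ^ (M + 1) * n * (C * ρ ^ M) * partitionZ lam n G) := by
        refine mul_le_mul_of_nonneg_left ((sum_loopWt_compLen_eq_succ_le hl hn hG x M).trans ?_)
          (by positivity)
        exact mul_le_mul_of_nonneg_right
          (mul_le_mul_of_nonneg_left hgrow (mul_nonneg (pow_nonneg hl _) hn)) hZ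
    _ = _ := by ring

theorem expMoment_le (hl : 0 ≤ lam) (hn : 0 ≤ n) (hG : IsFiniteDomain G) (x : Vtx d)
    {δ C ρ : ℝ} (hC : 0 ≤ C) (hρ : 0 ≤ ρ) (hgrow : ∀ M, (numSAW d x M : ℝ) ≤ C * ρ ^ M)
    (hq : Real.exp δ * lam * ρ < 1) :
    expMoment δ lam n G x ≤ 1 + n * C * Real.exp δ * lam / (1 - Real.exp δ * lam * ρ) := by
  have := hG.loopConfigs_finite.fintype
  set q := Real.exp δ * lam * ρ
  set Z := partitionZ lam n G
  have hZ : 0 < Z := one_pos.trans_le (one_le_partitionZ hl hn hG)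
  set A : ℕ → ℝ := fun N => ∑ κ ∈ Finset.univ.filter (fun κ : loopConfigs G => compLen κ.1 x = N),
    Real.exp (δ * compLen κ.1 x) * loopWt lam n κ.1
  have hA0 : A 0 ≤ Z := by
    rw [show Z = ∑ κ : loopConfigs G, loopWt lam n κ.1 from tsum_fintype _]
    calc A 0 = ∑ κ ∈ Finset.univ.filter (fun κ : loopConfigs G => compLen κ.1 x = 0),
          loopWt lam n κ.1 :=
          Finset.sum_congr rfl fun κ hκ => by simp [(Finset.mem_filter.1 hκ).2]
      _ ≤ _ := Finset.sum_le_sum_of_subset_of_nonneg (Finset.filter_subset _ _)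
          fun κ _ _ => loopWt_nonneg hl hn _
  have hsum : ∑ κ : loopConfigs G, Real.exp (δ * compLen κ.1 x) * loopWt lam n κ.1 =
      A 0 + ∑ M ∈ Finset.range G.edgeSet.ncard, A (M + 1) := by
    rw [add_comm, ← Finset.sum_range_succ' A, Finset.sum_fiberwise_of_maps_to fun κ _ =>
      Finset.mem_range_succ_iff.2 (compLen_le_ncard_edgeSet hG κ.2 x)]
  have hgeom : ∑ M ∈ Finset.range G.edgeSet.ncard, q ^ M ≤ 1 / (1 - q) := by
    simpa [← Finset.range_eq_Ico] using geom_sum_Ico_le_of_lt_one (m := 0) (by positivity) hq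
  have hB : 0 ≤ n * C * Real.exp δ * lam * Z := by positivity
  rw [expMoment, tsum_fintype, hsum, div_le_iff₀ hZ]
  calc A 0 + ∑ M ∈ Finset.range G.edgeSet.ncard, A (M + 1)
      ≤ Z + n * C * Real.exp δ * lam * Z * ∑ M ∈ Finset.range G.edgeSet.ncard, q ^ M := by
        rw [Finset.mul_sum]
        refine add_le_add hA0 (Finset.sum_le_sum fun M _ => ?_)
        exact (sum_exp_mul_loopWt_compLen_eq_succ_le hl hn hG x (hgrow M)).trans_eq (by ring)
    _ ≤ Z + n * C * Real.exp δ * lam * Z * (1 / (1 - q)) := by gcongr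
    _ = (1 + n * C * Real.exp δ * lam / (1 - q)) * Z := by ring

end ExponentialMoment

section CriticalParameter

variable {d : ℕ} {n lam : ℝ}

theorem exists_mathcalL_lt_top (hn : 0 ≤ n) (hl : 0 < lam) (hlt : lam < 1 / connConst d) :
    ∃ δ, 0 < δ ∧ mathcalL d δ lam n < ⊤ := by
  have hμ : 0 < connConst d := one_div_pos.1 (hl.trans hlt)
  obtain ⟨ρ, hμρ, hρ⟩ := exists_between ((lt_one_div hl hμ).1 hlt)
  have hρ0 : 0 < ρ := hμ.trans hμρ
  have hlρ : lam * ρ < 1 := by rwa [lt_div_iff₀ hl, mul_comm] at hρ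
  obtain ⟨C, hC, hgrow⟩ := exists_numSAW_le_mul_pow hμρ
  -- `δ := log (r / (λ ρ))` for some `λ ρ < r < 1`, so that `e^δ λ ρ = r`
  obtain ⟨r, hr, hr1⟩ := exists_between hlρ
  have hlρ0 : 0 < lam * ρ := mul_pos hl hρ0
  have hq : Real.exp (Real.log (r / (lam * ρ))) * lam * ρ < 1 := by
    rwa [Real.exp_log (div_pos (hlρ0.trans hr) hlρ0), mul_assoc, div_mul_cancel₀ _ hlρ0.ne']
  refine ⟨_, Real.log_pos ((one_lt_div hlρ0).2 hr), lt_of_le_of_lt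
    (iSup_le fun G => iSup_le fun hG => iSup_le fun x => iSup_le fun _ =>
      ENNReal.ofReal_le_ofReal (expMoment_le hl.le hn hG x hC hρ0.le
        (fun M => numSAW_eq_numSAW_zero x M ▸ hgrow M) hq)) ENNReal.ofReal_lt_top⟩

theorem ofReal_le_lambdaC {a : ℝ}
    (h : ∀ lam : ℝ, 0 < lam → lam < a → ∃ δ, 0 < δ ∧ mathcalL d δ lam n < ⊤) :
    ENNReal.ofReal a ≤ lambdaC d n := by
  refine le_of_forall_lt fun c hc => ?_
  obtain ⟨r, -, hcr, hra⟩ := ENNReal.lt_iff_exists_real_btwn.1 hc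
  have hr : 0 < r := ENNReal.ofReal_pos.1 (zero_le.trans_lt hcr)
  exact hcr.trans_le (le_iSup₂_of_le r ⟨hr.le, h r hr (ENNReal.ofReal_lt_ofReal_iff'.1 hra).1⟩
    le_rfl)

end CriticalParameter

theorem lambdaC_ge_inverse_mu_general (d : ℕ) (n : ℝ) (hn : 0 < n) :
    (∀ lam : ℝ, 0 < lam → lam < 1 / connConst d →
        ∃ δ : ℝ, 0 < δ ∧ mathcalL d δ lam n < ⊤) ∧
      ENNReal.ofReal (1 / connConst d) ≤ lambdaC d n :=
  ⟨fun _ => exists_mathcalL_lt_top hn.le, ofReal_le_lambdaC fun _ => exists_mathcalL_lt_top hn.le⟩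

/-- Below `1/μ` the loop length admits uniformly bounded exponential moments; consequently
`λ_c(n) ≥ 1/μ` for every `n ∈ (0,∞)`. -/
theorem lambdaC_ge_inverse_mu (d : ℕ) (hd : 2 ≤ d) (n : ℝ) (hn : 0 < n) :
    (∀ lam : ℝ, 0 < lam → lam < 1 / connConst d →
        ∃ δ : ℝ, 0 < δ ∧ mathcalL d δ lam n < ⊤) ∧
      ENNReal.ofReal (1 / connConst d) ≤ lambdaC d n :=
  lambdaC_ge_inverse_mu_general d n hn
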